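/- arXiv:1601.03518 — 3 statements merged into one kernel-verified Lean document; each statement's English description precedes it below -/
import Mathlib

section
/- If f : X → Y is α^m-continuous, then for every subset A of X, f(cl*(A)) ⊆ cl(f(A)), where cl*(A) denotes the intersection of all α^m-closed sets containing A. -/
variable {X Y Z : Type*}

def AlphaOpen [TopologicalSpace X] (A : Set X) : Prop :=
  A ⊆ interior (closure (interior A))

def AlphaMClosed [TopologicalSpace X] (A : Set X) : Prop :=
  ∀ U : Set X, AlphaOpen U → A ⊆ U → interior (closure A) ⊆ U

def AlphaMOpen [TopologicalSpace X] (A : Set X) : Prop :=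
  AlphaMClosed Aᶜ

def AlphaMContinuous [TopologicalSpace X] [TopologicalSpace Y] (f : X → Y) : Prop :=
  ∀ F : Set Y, IsClosed F → AlphaMClosed (f ⁻¹' F)

def AlphaMIrresolute [TopologicalSpace X] [TopologicalSpace Y] (f : X → Y) : Prop :=
  ∀ B : Set Y, AlphaMClosed B → AlphaMClosed (f ⁻¹' B)

def AlphaMClosedMap [TopologicalSpace X] [TopologicalSpace Y] (f : X → Y) : Prop :=
  ∀ F : Set X, IsClosed F → AlphaMClosed (f '' F)

def ClStar [TopologicalSpace X] (A : Set X) : Set X :=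
  ⋂₀ {C : Set X | AlphaMClosed C ∧ A ⊆ C}


theorem stmt4 [TopologicalSpace X] [TopologicalSpace Y] (f : X → Y)
    (hf : AlphaMContinuous f) (A : Set X) :
    f '' ClStar A ⊆ closure (f '' A) := by
  have hC : AlphaMClosed (f ⁻¹' closure (f '' A)) := hf _ isClosed_closure
  have hsub : ClStar A ⊆ f ⁻¹' closure (f '' A) :=
    Set.sInter_subset_of_mem ⟨hC, fun x hx => subset_closure (Set.mem_image_of_mem f hx)⟩
  exact Set.image_subset_iff.mpr hsub
end

section
/- Suppose f : X → Y satisfies: for each point x ∈ X and each open set V containing f(x), there exists an α^m-open set U containing x such that f(U) ⊆ V. Then for every subset A of X, f(cl*(A)) ⊆ cl(f(A)). -/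
variable {X Y Z : Type*}

theorem stmt5 [TopologicalSpace X] [TopologicalSpace Y] (f : X → Y)
    (hf : ∀ x : X, ∀ V : Set Y, IsOpen V → f x ∈ V →
      ∃ U : Set X, AlphaMOpen U ∧ x ∈ U ∧ f '' U ⊆ V)
    (A : Set X) : f '' ClStar A ⊆ closure (f '' A) := by
  rintro y ⟨x, hx, rfl⟩
  by_contra hy
  obtain ⟨U, hU, hxU, hfU⟩ := hf x (closure (f '' A))ᶜ isClosed_closure.isOpen_compl hy
  have hAU : A ⊆ Uᶜ := by
    intro a ha haU
    exact hfU ⟨a, haU, rfl⟩ (subset_closure ⟨a, ha, rfl⟩)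
  exact hx Uᶜ ⟨hU, hAU⟩ hxU
end

section
/- Suppose f : X → Y satisfies f(cl*(A)) ⊆ cl(f(A)) for every subset A of X. Then for each x ∈ X and each open set V containing f(x), there exists an α^m-open set U containing x with f(U) ⊆ V. -/
variable {X Y Z : Type*}

theorem stmt6 [TopologicalSpace X] [TopologicalSpace Y] (f : X → Y)
    (hinter : ∀ S : Set (Set X), (∀ C ∈ S, AlphaMClosed C) → AlphaMClosed (⋂₀ S))
    (hf : ∀ A : Set X, f '' ClStar A ⊆ closure (f '' A))
    (x : X) (V : Set Y) (hV : IsOpen V) (hx : f x ∈ V) :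
    ∃ U : Set X, AlphaMOpen U ∧ x ∈ U ∧ f '' U ⊆ V := by
  set A := f ⁻¹' Vᶜ with hA
  have hsub : A ⊆ ClStar A := fun a ha => fun C hC => hC.2 ha
  have hclosed : AlphaMClosed (ClStar A) := by
    apply hinter; intro C hC; exact hC.1
  refine ⟨(ClStar A)ᶜ, ?_, ?_, ?_⟩
  · unfold AlphaMOpen; rwa [compl_compl]
  · intro hxA
    have : f x ∈ closure (f '' A) := hf A ⟨x, hxA, rfl⟩
    have hclV : closure (f '' A) ⊆ Vᶜ := by
      apply closure_minimal _ (isClosed_compl_iff.mpr hV)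
      rintro y ⟨a, ha, rfl⟩; exact ha
    exact hclV this hx
  · rintro y ⟨u, hu, rfl⟩
    by_contra h
    exact hu (hsub h)
end
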